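/- Let d ≥ 1 and k ≥ 1, let G = (V,D) be a graph with no isolated vertices whose edge set D is a k-fold R_d-circuit, and let G*v be the cone of G over a new vertex v, so that E(G*v) is a k-fold R_{d+1}-circuit. If all edges of G*v incident to v belong to the same part of the principal partition of E(G*v), then k = 1. -/

import Mathlib

open scoped BigOperators

/-- The row of the `d`-dimensional rigidity matrix of a realisation `p : V → ℝ^d`
indexed by the (unordered) edge `e`. -/
noncomputable def rigRow (d : ℕ) {V : Type*} [DecidableEq V]
    (p : V → Fin d → ℝ) (e : Sym2 V) : V × Fin d → ℝ :=
  Sym2.lift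
    ⟨fun u v wi =>
        (((if wi.1 = u then (1 : ℝ) else 0) - (if wi.1 = v then (1 : ℝ) else 0)) *
          (p u wi.2 - p v wi.2)),
      fun u v => by funext wi; ring⟩ e

/-- A realisation is generic if the coordinates of the points form an algebraically
independent set over `ℚ`. -/
def Generic (d : ℕ) {V : Type*} (p : V → Fin d → ℝ) : Prop :=
  AlgebraicIndependent ℚ fun vi : V × Fin d => p vi.1 vi.2

/-- `rrk d p F` : the rank of the set of rows of the rigidity matrix of `(K_V, p)`
indexed by the edges in `F`.  For generic `p` this is the rank function `r_d` of
the generic `d`-dimensional rigidity matroid. -/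
noncomputable def rrk (d : ℕ) {V : Type*} [Fintype V] [DecidableEq V]
    (p : V → Fin d → ℝ) (F : Set (Sym2 V)) : ℕ :=
  Module.finrank ℝ (Submodule.span ℝ (rigRow d p '' F))

/-- `D` is a `k`-fold circuit (with respect to the realisation `p`) :
`r (D \ {f}) = r D` for every `f ∈ D`, and `r D = |D| - k`. -/
def IsKFoldCircuit (d : ℕ) {V : Type*} [Fintype V] [DecidableEq V]
    (p : V → Fin d → ℝ) (D : Finset (Sym2 V)) (k : ℕ) : Prop :=
  (∀ f ∈ D, rrk d p (↑D \ {f}) = rrk d p ↑D) ∧ rrk d p ↑D + k = D.card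

/-- An `R_d`-circuit: `r C = |C| - 1` and `r (C \ {f}) = r C` for all `f ∈ C`. -/
def IsCircuit (d : ℕ) {V : Type*} [Fintype V] [DecidableEq V]
    (p : V → Fin d → ℝ) (C : Finset (Sym2 V)) : Prop :=
  IsKFoldCircuit d p C 1

/-- `A` is a part of the principal partition of the `k`-fold circuit `D`:
the parts are the sets `D \ B` where `B` runs over the `(k-1)`-fold circuits
contained in `D`. -/
def IsPrincipalPart (d : ℕ) {V : Type*} [Fintype V] [DecidableEq V]
    (p : V → Fin d → ℝ) (D : Finset (Sym2 V)) (k : ℕ) (A : Finset (Sym2 V)) : Prop :=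
  ∃ B ⊆ D, IsKFoldCircuit d p B (k - 1) ∧ A = D \ B

/-- Closure in the rigidity matroid: all edges of `K_V` whose addition to `F`
does not increase the rank. -/
def rcl (d : ℕ) {V : Type*} [Fintype V] [DecidableEq V]
    (p : V → Fin d → ℝ) (F : Set (Sym2 V)) : Set (Sym2 V) :=
  {e | ¬ e.IsDiag ∧ rrk d p (insert e F) = rrk d p F}

/-- A `k`-fold circuit `D` with principal partition `A_1, …, A_ℓ` is balanced if
`r_d (⋂ i, cl_d (D \ A_i)) = ℓ - k`. -/
def IsBalanced (d : ℕ) {V : Type*} [Fintype V] [DecidableEq V]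
    (p : V → Fin d → ℝ) (D : Finset (Sym2 V)) (k : ℕ) : Prop :=
  rrk d p (⋂ A ∈ {A | IsPrincipalPart d p D k A}, rcl d p ↑(D \ A)) + k =
    Set.ncard {A | IsPrincipalPart d p D k A}

/-- A vertex is monochromatic if all edges of `D` incident with it lie in a single
part of the principal partition (and technicolour otherwise). -/
def Monochromatic (d : ℕ) {V : Type*} [Fintype V] [DecidableEq V]
    (p : V → Fin d → ℝ) (D : Finset (Sym2 V)) (k : ℕ) (w : V) : Prop :=
  ∃ A, IsPrincipalPart d p D k A ∧ ∀ e ∈ D, w ∈ e → e ∈ A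

/-- The graph `(W, E)` is `R_d`-rigid: it is a complete graph on at most `d+1`
vertices, or `r_d(E) = d|W| - (d+1 choose 2)`. -/
def IsRigidOn (d : ℕ) {V : Type*} [Fintype V] [DecidableEq V]
    (p : V → Fin d → ℝ) (W : Finset V) (E : Finset (Sym2 V)) : Prop :=
  (W.card ≤ d + 1 ∧ ∀ u ∈ W, ∀ w ∈ W, u ≠ w → s(u, w) ∈ E) ∨
    (rrk d p ↑E : ℤ) + ((d + 1).choose 2 : ℤ) = (d : ℤ) * (W.card : ℤ)

/-- The edge set of the cone of (the graph with edge set) `D` over a new vertex,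
realised as `none : Option V`. -/
def coneEdges {V : Type*} [Fintype V] [DecidableEq V] (D : Finset (Sym2 V)) :
    Finset (Sym2 (Option V)) :=
  D.image (Sym2.map Option.some) ∪
    Finset.univ.image fun u : V => s((Option.some u : Option V), (none : Option V))

/-- The degree of the vertex `w` in the edge set `D`. -/
def degIn {V : Type*} [Fintype V] [DecidableEq V] (D : Finset (Sym2 V)) (w : V) : ℕ :=
  (D.filter fun e => w ∈ e).card

/-- The set of vertices incident with an edge of `F`. -/
def esupp {V : Type*} [Fintype V] [DecidableEq V] (F : Finset (Sym2 V)) : Finset V :=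
  Finset.univ.filter fun w => ∃ e ∈ F, w ∈ e

/-!
Suppose `k ≥ 2`. The part of the principal partition containing every cone edge is the
complement of a `(k-1)`-fold `R_{d+1}`-circuit avoiding the apex, i.e. of the lift of some
`B ⊆ D` with `r_{d+1}(B) = |B| - k + 1`, while `r_d(B) ≥ |B| - k` because `D` is a `k`-fold
circuit. This contradicts the rank gain `r_{d+1}(F) ≥ r_d(F) + min 2 (|F| - r_d(F))` for
sets `F` of non-loop edges.

For the rank gain, append a last coordinate `z` to a realisation `p`. A dependence `ω` among
the rows of `F` at `(p, z)` is a self-stress of `(F, p)` whose weighted Laplacian `L_ω` kills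
`z`. When the self-stresses form a space of dimension at most two, a pencil argument (two
independent symmetric matrices `M₁, M₂` have `M₁ z, M₂ z` independent for some `z`) and the
injectivity of `ω ↦ L_ω` on non-loop edges give a `z` killed by no nonzero `L_ω`. A Gram
determinant then transfers the independence to any generic realisation.
-/

open Finset Submodule Matrix Module

section LinearAlgebra

variable {K : Type*} [Field K]

section Pencil

variable {Z W : Type*} [AddCommGroup Z] [Module K Z] [AddCommGroup W] [Module K W]

theorem mem_span_singleton_of_not_linearIndependent_pair {x y : W}
    (h : ¬ LinearIndependent K ![x, y]) (hy : y ≠ 0) : x ∈ K ∙ y := by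
  rw [LinearIndependent.pair_symm_iff, LinearIndependent.pair_iff' hy] at h
  push Not at h
  obtain ⟨a, ha⟩ := h
  exact mem_span_singleton.mpr ⟨a, ha⟩

theorem LinearMap.forall_mem_span_singleton_of_not_linearIndependent_pair [NeZero (2 : K)]
    {A C : Z →ₗ[K] W} (h : ∀ z, ¬ LinearIndependent K ![A z, C z]) {z₁ : Z} (hAz₁ : A z₁ ≠ 0)
    (hCz₁ : C z₁ = 0) (hC : C ≠ 0) (z : Z) : A z ∈ K ∙ A z₁ ∧ C z ∈ K ∙ A z₁ := by
  -- Off `ker C`, test the dependence at `z₁ ± ξ`: both `A z₁ ± A ξ` lie on the line of `C ξ`.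
  have off_ker : ∀ ξ, C ξ ≠ 0 → A ξ ∈ K ∙ A z₁ ∧ C ξ ∈ K ∙ A z₁ := by
    intro ξ hξ
    have hplus := mem_span_singleton_of_not_linearIndependent_pair
      (by simpa [hCz₁] using h (z₁ + ξ)) hξ
    have hminus := mem_span_singleton_of_not_linearIndependent_pair
      (by simpa [hCz₁] using h (z₁ - ξ)) (neg_ne_zero.mpr hξ)
    rw [← Set.neg_singleton, span_neg] at hminus
    have htwo : (2 : K) • A z₁ ∈ K ∙ C ξ := by
      convert add_mem hplus hminus using 1
      module
    obtain ⟨s, hs⟩ := mem_span_singleton.mp ((smul_mem_iff _ two_ne_zero).mp htwo)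
    have hs0 : s ≠ 0 := by
      rintro rfl
      exact hAz₁ (by simpa using hs.symm)
    have hCξ : C ξ ∈ K ∙ A z₁ := mem_span_singleton.mpr ⟨s⁻¹, by rw [← hs, inv_smul_smul₀ hs0]⟩
    refine ⟨?_, hCξ⟩
    have hline : K ∙ C ξ ≤ K ∙ A z₁ := (span_singleton_le_iff_mem _ _).mpr hCξ
    convert sub_mem (hline hplus) (mem_span_singleton_self (A z₁)) using 1
    abel
  obtain ⟨ξ₀, hξ₀⟩ : ∃ ξ₀, C ξ₀ ≠ 0 := by
    by_contra! h0
    exact hC (LinearMap.ext h0)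
  by_cases hz : C z = 0
  · refine ⟨?_, by simp [hz]⟩
    convert sub_mem (off_ker (z + ξ₀) (by simpa [hz] using hξ₀)).1 (off_ker ξ₀ hξ₀).1 using 1
    simp
  · exact off_ker z hz

theorem LinearMap.not_linearIndependent_pair_or_exists_mem_span_singleton [NeZero (2 : K)]
    (A B : Z →ₗ[K] W) (h : ∀ z, ¬ LinearIndependent K ![A z, B z]) :
    ¬ LinearIndependent K ![A, B] ∨ ∃ c : W, ∀ z, A z ∈ K ∙ c ∧ B z ∈ K ∙ c := by
  by_cases hA : A = 0
  · left
    rw [hA]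
    exact fun hli => hli.ne_zero 0 rfl
  obtain ⟨z₁, hz₁⟩ : ∃ z₁, A z₁ ≠ 0 := by
    by_contra! h0
    exact hA (LinearMap.ext h0)
  obtain ⟨μ, hμ⟩ := mem_span_singleton.mp
    (mem_span_singleton_of_not_linearIndependent_pair
      (fun hli => h z₁ (LinearIndependent.pair_symm_iff.mp hli)) hz₁)
  set C := (-μ) • A + B with hC
  by_cases hC0 : C = 0
  · left
    rw [← LinearIndependent.pair_add_smul_right_iff (c := -μ), ← hC, hC0]
    exact fun hli => hli.ne_zero 1 rfl
  have hAC : ∀ z, ¬ LinearIndependent K ![A z, C z] := fun z => by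
    rw [show C z = (-μ) • A z + B z from rfl, LinearIndependent.pair_add_smul_right_iff]
    exact h z
  have hline :=
    forall_mem_span_singleton_of_not_linearIndependent_pair hAC hz₁ (by simp [hC, ← hμ]) hC0
  right
  refine ⟨A z₁, fun z => ⟨(hline z).1, ?_⟩⟩
  rw [show B z = C z + μ • A z by simp [hC]]
  exact add_mem (hline z).2 (smul_mem _ _ (hline z).1)

end Pencil

variable {n : Type*} [Fintype n] [DecidableEq n]

theorem Matrix.IsSymm.exists_eq_smul_vecMulVec {M : Matrix n n K} (hM : M.IsSymm) {c : n → K}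
    (h : ∀ z, M *ᵥ z ∈ K ∙ c) : ∃ κ : K, M = κ • vecMulVec c c := by
  choose t ht using fun x => mem_span_singleton.mp (h (Pi.single x 1))
  have hentry : ∀ w x, M w x = t x * c w := fun w x => by
    simpa [mulVec_single_one] using (congrFun (ht x) w).symm
  by_cases hc : c = 0
  · exact ⟨0, by ext w x; simp [hentry, hc]⟩
  obtain ⟨x₀, hx₀⟩ : ∃ x₀, c x₀ ≠ 0 := by
    by_contra! h0
    exact hc (funext h0)
  have hsymm : ∀ w x, t x * c w = t w * c x := fun w x => by
    rw [← hentry, ← hentry, ← hM.apply w x]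
  refine ⟨t x₀ / c x₀, ?_⟩
  ext w x
  have hx := hsymm x₀ x
  simp only [hentry, smul_apply, vecMulVec_apply, smul_eq_mul]
  field_simp
  linear_combination c w * hx

theorem Matrix.exists_linearIndependent_mulVec_pair [NeZero (2 : K)] {M₁ M₂ : Matrix n n K}
    (h₁ : M₁.IsSymm) (h₂ : M₂.IsSymm) (h : LinearIndependent K ![M₁, M₂]) :
    ∃ z, LinearIndependent K ![M₁ *ᵥ z, M₂ *ᵥ z] := by
  by_contra! hz
  rcases (toLin' M₁).not_linearIndependent_pair_or_exists_mem_span_singleton (toLin' M₂)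
    (by simpa using hz) with hdep | ⟨c, hc⟩
  · apply hdep
    rw [LinearIndependent.pair_iff] at h ⊢
    intro s t hst
    apply h s t
    apply toLin'.injective
    rw [map_add, map_smul, map_smul, hst, map_zero]
  · obtain ⟨κ₁, rfl⟩ := h₁.exists_eq_smul_vecMulVec fun z => (hc z).1
    obtain ⟨κ₂, rfl⟩ := h₂.exists_eq_smul_vecMulVec fun z => (hc z).2
    obtain ⟨rfl, hκ₁⟩ := LinearIndependent.pair_iff.mp h κ₂ (-κ₁) (by module)
    exact h.ne_zero 0 (by simp [neg_eq_zero.mp hκ₁])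

theorem Matrix.exists_forall_mulVec_eq_zero_imp_eq_zero [NeZero (2 : K)]
    (S : Submodule K (Matrix n n K)) (hS : finrank K S ≤ 2) (hsymm : ∀ M ∈ S, M.IsSymm) :
    ∃ z, ∀ M ∈ S, M *ᵥ z = 0 → M = 0 := by
  rcases Nat.lt_or_ge (finrank K S) 2 with hlt | hge
  · obtain ⟨M₀, hM₀⟩ := finrank_le_one_iff.mp (Nat.le_of_lt_succ hlt)
    have hmul : ∀ M ∈ S, ∃ a : K, M = a • (M₀ : Matrix n n K) := fun M hM => by
      obtain ⟨a, ha⟩ := hM₀ ⟨M, hM⟩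
      exact ⟨a, (congrArg Subtype.val ha).symm⟩
    by_cases h0 : (M₀ : Matrix n n K) = 0
    · exact ⟨0, fun M hM _ => by obtain ⟨a, rfl⟩ := hmul M hM; simp [h0]⟩
    obtain ⟨z, hz⟩ : ∃ z, (M₀ : Matrix n n K) *ᵥ z ≠ 0 := by
      by_contra! h
      exact h0 (toLin'.injective (LinearMap.ext fun z => by simpa using h z))
    refine ⟨z, fun M hM hMz => ?_⟩
    obtain ⟨a, rfl⟩ := hmul M hM
    rw [smul_mulVec, smul_eq_zero] at hMz
    simp [hMz.resolve_right hz]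
  · let b := finBasisOfFinrankEq K S (le_antisymm hS hge)
    have hb : LinearIndependent K ![(b 0 : Matrix n n K), b 1] := by
      have hb' : LinearIndependent K ![b 0, b 1] := by
        convert b.linearIndependent
        ext i : 1
        fin_cases i <;> rfl
      rw [LinearIndependent.pair_iff] at hb' ⊢
      exact fun s t hst => hb' s t (Subtype.ext hst)
    obtain ⟨z, hz⟩ := exists_linearIndependent_mulVec_pair (hsymm _ (b 0).2) (hsymm _ (b 1).2) hb
    refine ⟨z, fun M hM hMz => ?_⟩
    obtain ⟨s, t, rfl⟩ : ∃ s t : K, s • (b 0 : Matrix n n K) + t • (b 1 : Matrix n n K) = M := by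
      have hsum := b.sum_repr ⟨M, hM⟩
      rw [Fin.sum_univ_two] at hsum
      exact ⟨_, _, by simpa using congrArg Subtype.val hsum⟩
    rw [add_mulVec, smul_mulVec, smul_mulVec] at hMz
    obtain ⟨rfl, rfl⟩ := LinearIndependent.pair_iff.mp hz s t hMz
    simp

end LinearAlgebra

theorem Matrix.linearIndependent_row_iff_det_mul_transpose_ne_zero {K m n : Type*} [Field K]
    [LinearOrder K] [IsStrictOrderedRing K] [Fintype m] [DecidableEq m] [Fintype n]
    (A : Matrix m n K) : LinearIndependent K A.row ↔ (A * Aᵀ).det ≠ 0 := by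
  rw [linearIndependent_iff_card_eq_finrank_span, Set.finrank, ← rank_eq_finrank_span_row,
    ← rank_self_mul_transpose, rank_eq_finrank_span_row, ← Set.finrank,
    ← linearIndependent_iff_card_eq_finrank_span, linearIndependent_rows_iff_isUnit,
    isUnit_iff_isUnit_det, isUnit_iff_ne_zero]

theorem Generic.comp {V W : Type*} {d : ℕ} {q : V → Fin d → ℝ} (hq : Generic d q) {f : W → V}
    (hf : Function.Injective f) : Generic d fun w => q (f w) :=
  AlgebraicIndependent.comp hq (Prod.map f id) (hf.prodMap Function.injective_id)

section Rigidity

variable {V : Type*} [DecidableEq V]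

noncomputable abbrev rigRows (d : ℕ) (p : V → Fin d → ℝ) (F : Finset (Sym2 V)) :
    F → V × Fin d → ℝ :=
  fun e => rigRow d p e

theorem rigRow_mk (d : ℕ) (p : V → Fin d → ℝ) (u v : V) (wi : V × Fin d) :
    rigRow d p s(u, v) wi =
      ((if wi.1 = u then (1 : ℝ) else 0) - (if wi.1 = v then (1 : ℝ) else 0)) *
        (p u wi.2 - p v wi.2) := rfl

theorem rigRow_snoc_castSucc (d : ℕ) (p : V → Fin d → ℝ) (z : V → ℝ) (e : Sym2 V) (w : V)
    (j : Fin d) :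
    rigRow (d + 1) (fun v => Fin.snoc (p v) (z v)) e (w, j.castSucc) = rigRow d p e (w, j) := by
  induction e using Sym2.ind with
  | _ u v => simp [rigRow_mk]

noncomputable def edgeLap (e : Sym2 V) : Matrix V V ℝ :=
  Sym2.lift
    ⟨fun u v => vecMulVec (Pi.single u 1 - Pi.single v 1) (Pi.single u 1 - Pi.single v 1),
      fun u v => by
        ext i j
        simp only [vecMulVec_apply, Pi.sub_apply]
        ring⟩ e

theorem edgeLap_isSymm (e : Sym2 V) : (edgeLap e).IsSymm := by
  induction e using Sym2.ind with
  | _ u v => simp [edgeLap, IsSymm, transpose_vecMulVec]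

theorem edgeLap_apply_of_ne {x w : V} (hxw : x ≠ w) (e : Sym2 V) :
    edgeLap e x w = if e = s(x, w) then -1 else 0 := by
  induction e using Sym2.ind with
  | _ u v =>
    simp only [edgeLap, Sym2.lift_mk, vecMulVec_apply, Pi.sub_apply, Pi.single_apply, Sym2.eq_iff]
    split_ifs <;> grind

noncomputable def weightedLap (F : Finset (Sym2 V)) : (F → ℝ) →ₗ[ℝ] Matrix V V ℝ :=
  Fintype.linearCombination ℝ fun e => edgeLap e

theorem weightedLap_isSymm (F : Finset (Sym2 V)) (ω : F → ℝ) : (weightedLap F ω).IsSymm := by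
  simp only [weightedLap, Fintype.linearCombination_apply, IsSymm, transpose_sum,
    transpose_smul, (edgeLap_isSymm _).eq]

theorem weightedLap_apply_of_ne {F : Finset (Sym2 V)} (ω : F → ℝ) {x w : V} (hxw : x ≠ w)
    (he : s(x, w) ∈ F) : weightedLap F ω x w = -ω ⟨s(x, w), he⟩ := by
  rw [weightedLap, Fintype.linearCombination_apply, Matrix.sum_apply,
    Finset.sum_eq_single ⟨s(x, w), he⟩]
  · simp [edgeLap_apply_of_ne hxw]
  · intro e _ hne
    have : (e : Sym2 V) ≠ s(x, w) := fun h => hne (Subtype.ext h)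
    simp [edgeLap_apply_of_ne hxw, this]
  · simp

theorem weightedLap_injective {F : Finset (Sym2 V)} (hF : ∀ e ∈ F, ¬ e.IsDiag) :
    Function.Injective (weightedLap F) := by
  rw [← LinearMap.ker_eq_bot, eq_bot_iff]
  intro ω hω
  ext ⟨e, he⟩
  induction e using Sym2.ind with
  | _ x w =>
    have hxw : x ≠ w := fun h => hF _ he (Sym2.mk_isDiag_iff.mpr h)
    simpa [weightedLap_apply_of_ne ω hxw he] using congrFun (congrFun hω x) w

noncomputable def genericRigRow (d : ℕ) (e : Sym2 V) (wi : V × Fin d) :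
    MvPolynomial (V × Fin d) ℚ :=
  Sym2.lift
    ⟨fun u v => ((if wi.1 = u then 1 else 0) - (if wi.1 = v then 1 else 0)) *
        (MvPolynomial.X (u, wi.2) - MvPolynomial.X (v, wi.2)),
      fun u v => by ring⟩ e

theorem aeval_genericRigRow (d : ℕ) (x : V × Fin d → ℝ) (e : Sym2 V) (wi : V × Fin d) :
    MvPolynomial.aeval x (genericRigRow d e wi) = rigRow d (fun v i => x (v, i)) e wi := by
  induction e using Sym2.ind with
  | _ u v => simp [genericRigRow, rigRow_mk, apply_ite (MvPolynomial.aeval x)]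

variable [Fintype V]

theorem rrk_mono (d : ℕ) (p : V → Fin d → ℝ) {F G : Set (Sym2 V)} (h : F ⊆ G) :
    rrk d p F ≤ rrk d p G :=
  finrank_mono (span_mono (Set.image_mono h))

theorem rrk_union_le (d : ℕ) (p : V → Fin d → ℝ) (F G : Set (Sym2 V)) :
    rrk d p (F ∪ G) ≤ rrk d p F + rrk d p G := by
  rw [rrk, Set.image_union, span_union]
  exact finrank_add_le_finrank_add_finrank _ _

theorem rrk_add_finrank_ker (d : ℕ) (p : V → Fin d → ℝ) (F : Finset (Sym2 V)) :
    rrk d p F + finrank ℝ (LinearMap.ker (Fintype.linearCombination ℝ (rigRows d p F))) =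
      F.card := by
  have h := LinearMap.finrank_range_add_finrank_ker (Fintype.linearCombination ℝ (rigRows d p F))
  rw [Fintype.range_linearCombination, finrank_fintype_fun_eq_card, Fintype.card_coe] at h
  rwa [rrk, Set.image_eq_range]

theorem rrk_le_card (d : ℕ) (p : V → Fin d → ℝ) (F : Finset (Sym2 V)) : rrk d p F ≤ F.card :=
  (rrk_add_finrank_ker d p F).le.trans' (Nat.le_add_right _ _)

theorem linearIndependent_rigRows_iff {d : ℕ} {p : V → Fin d → ℝ} {F : Finset (Sym2 V)} :
    LinearIndependent ℝ (rigRows d p F) ↔ rrk d p F = F.card := by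
  rw [linearIndependent_iff_injective_fintypeLinearCombination, ← LinearMap.ker_eq_bot,
    ← Submodule.finrank_eq_zero]
  have := rrk_add_finrank_ker d p F
  omega

theorem card_le_rrk_add_of_subset {d k : ℕ} {p : V → Fin d → ℝ} {B D : Finset (Sym2 V)}
    (hD : rrk d p D + k = D.card) (hBD : B ⊆ D) : B.card ≤ rrk d p B + k := by
  have hunion : rrk d p D ≤ rrk d p B + rrk d p ↑(D \ B) := by
    simpa [Finset.coe_sdiff, Set.union_sdiff_cancel (Finset.coe_subset.mpr hBD)]
      using rrk_union_le d p ↑B ↑(D \ B)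
  have := rrk_le_card d p (D \ B)
  have := Finset.card_sdiff_add_card_eq_card hBD
  omega

theorem exists_rrk_erase_eq {d : ℕ} {p : V → Fin d → ℝ} {F : Finset (Sym2 V)}
    (h : rrk d p F < F.card) : ∃ e ∈ F, rrk d p ↑(F.erase e) = rrk d p F := by
  have hdep : ¬ LinearIndependent ℝ (rigRows d p F) := fun hli =>
    h.ne (linearIndependent_rigRows_iff.mp hli)
  rw [linearIndependent_iff_notMem_span] at hdep
  push Not at hdep
  obtain ⟨⟨e, heF⟩, he⟩ := hdep
  have himg : rigRows d p F '' (Set.univ \ {⟨e, heF⟩}) = rigRow d p '' ↑(F.erase e) := by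
    ext x
    simp only [Set.mem_image, Set.mem_sdiff, Set.mem_univ, Set.mem_singleton_iff, true_and,
      Finset.coe_erase, Subtype.exists, Subtype.mk.injEq]
    aesop
  rw [himg] at he
  refine ⟨e, heF, ?_⟩
  rw [rrk, rrk, ← Finset.insert_erase heF, Finset.coe_insert, Set.image_insert_eq,
    span_insert_eq_span he, Finset.erase_insert (Finset.notMem_erase _ _)]

theorem exists_subset_rrk_eq_card_eq (d : ℕ) (p : V → Fin d → ℝ) (F : Finset (Sym2 V)) (m : ℕ)
    (hm : rrk d p F + m ≤ F.card) :
    ∃ F' ⊆ F, rrk d p F' = rrk d p F ∧ F'.card = rrk d p F + m := by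
  induction F using Finset.strongInduction with
  | _ F ih =>
    rcases hm.eq_or_lt with heq | hlt
    · exact ⟨F, subset_rfl, rfl, heq.symm⟩
    obtain ⟨e, he, hrk⟩ := exists_rrk_erase_eq (by omega : rrk d p F < F.card)
    obtain ⟨F', hF', hrk', hcard'⟩ := ih _ (Finset.erase_ssubset he)
      (by rw [hrk, Finset.card_erase_of_mem he]; omega)
    exact ⟨F', hF'.trans (Finset.erase_subset _ _), hrk'.trans hrk, hrk ▸ hcard'⟩

theorem rigRow_snoc_last (d : ℕ) (p : V → Fin d → ℝ) (z : V → ℝ) (e : Sym2 V) (w : V) :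
    rigRow (d + 1) (fun v => Fin.snoc (p v) (z v)) e (w, Fin.last d) = (edgeLap e *ᵥ z) w := by
  induction e using Sym2.ind with
  | _ u v =>
    simp [rigRow_mk, edgeLap, vecMulVec_apply, mulVec, dotProduct, Pi.single_apply, sub_mul,
      Finset.sum_sub_distrib]

theorem linearCombination_rigRows_snoc_eq_zero_iff {d : ℕ} {p : V → Fin d → ℝ} {z : V → ℝ}
    {F : Finset (Sym2 V)} {ω : F → ℝ} :
    Fintype.linearCombination ℝ (rigRows (d + 1) (fun v => Fin.snoc (p v) (z v)) F) ω = 0 ↔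
      Fintype.linearCombination ℝ (rigRows d p F) ω = 0 ∧ weightedLap F ω *ᵥ z = 0 := by
  simp only [funext_iff, Prod.forall, Fin.forall_fin_succ', forall_and, Pi.zero_apply,
    Fintype.linearCombination_apply, Finset.sum_apply, Pi.smul_apply, smul_eq_mul,
    rigRow_snoc_castSucc, rigRow_snoc_last, weightedLap, sum_mulVec, smul_mulVec]

theorem exists_linearIndependent_rigRows_snoc {d : ℕ} (p : V → Fin d → ℝ) {F : Finset (Sym2 V)}
    (hF : ∀ e ∈ F, ¬ e.IsDiag) (hcard : F.card ≤ rrk d p F + 2) :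
    ∃ z : V → ℝ, LinearIndependent ℝ (rigRows (d + 1) (fun v => Fin.snoc (p v) (z v)) F) := by
  have hS : finrank ℝ (LinearMap.ker (Fintype.linearCombination ℝ (rigRows d p F))) ≤ 2 := by
    have := rrk_add_finrank_ker d p F
    omega
  obtain ⟨z, hz⟩ := exists_forall_mulVec_eq_zero_imp_eq_zero (.map (weightedLap F) _)
    ((finrank_map_le _ _).trans hS) (by rintro _ ⟨ω, -, rfl⟩; exact weightedLap_isSymm F ω)
  refine ⟨z, linearIndependent_iff_injective_fintypeLinearCombination.mpr ?_⟩
  rw [← LinearMap.ker_eq_bot, eq_bot_iff]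
  intro ω hω
  obtain ⟨hstress, hlap⟩ := linearCombination_rigRows_snoc_eq_zero_iff.mp hω
  exact weightedLap_injective hF ((hz _ ⟨ω, hstress, rfl⟩ hlap).trans (map_zero _).symm)

theorem Generic.linearIndependent_rigRows {d : ℕ} {q : V → Fin d → ℝ} (hq : Generic d q)
    {c : V → Fin d → ℝ} {F : Finset (Sym2 V)} (h : LinearIndependent ℝ (rigRows d c F)) :
    LinearIndependent ℝ (rigRows d q F) := by
  -- `P Pᵀ` is the Gram matrix of the rows with indeterminate coordinates: its determinant is
  -- nonzero at `c`, hence as a polynomial, hence at the algebraically independent `q`.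
  let P : Matrix F (V × Fin d) (MvPolynomial (V × Fin d) ℚ) := of fun e wi => genericRigRow d e wi
  have heval : ∀ x : V → Fin d → ℝ, MvPolynomial.aeval (fun vi => x vi.1 vi.2) (P * Pᵀ).det =
      (of (rigRows d x F) * (of (rigRows d x F))ᵀ).det := by
    intro x
    rw [AlgHom.map_det, AlgHom.mapMatrix_apply, Matrix.map_mul, transpose_map]
    congr 3 <;> ext e wi <;> exact aeval_genericRigRow d _ e wi
  have hc := (linearIndependent_row_iff_det_mul_transpose_ne_zero (of (rigRows d c F))).mp h
  rw [← heval] at hc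
  refine (linearIndependent_row_iff_det_mul_transpose_ne_zero (of (rigRows d q F))).mpr ?_
  rw [← heval]
  exact fun h0 => hc (by rw [hq.eq_zero_of_aeval_eq_zero _ h0, map_zero])

theorem rrk_le_rrk_of_generic {d : ℕ} {q : V → Fin d → ℝ} (hq : Generic d q)
    (c : V → Fin d → ℝ) (F : Finset (Sym2 V)) : rrk d c F ≤ rrk d q F := by
  obtain ⟨I, hIF, hrk, hcard⟩ := exists_subset_rrk_eq_card_eq d c F 0
    (by simpa using rrk_le_card d c F)
  have hI : LinearIndependent ℝ (rigRows d c I) := linearIndependent_rigRows_iff.mpr (by omega)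
  calc rrk d c F = I.card := by omega
    _ = rrk d q I := (linearIndependent_rigRows_iff.mp (hq.linearIndependent_rigRows hI)).symm
    _ ≤ rrk d q F := rrk_mono d q (coe_subset.mpr hIF)

theorem rrk_add_min_le_rrk_succ {d : ℕ} (p : V → Fin d → ℝ) {q : V → Fin (d + 1) → ℝ}
    (hq : Generic (d + 1) q) {F : Finset (Sym2 V)} (hF : ∀ e ∈ F, ¬ e.IsDiag) :
    rrk d p F + min 2 (F.card - rrk d p F) ≤ rrk (d + 1) q F := by
  obtain ⟨F', hF'F, hrk, hcard⟩ := exists_subset_rrk_eq_card_eq d p F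
    (min 2 (F.card - rrk d p F)) (by have := rrk_le_card d p F; omega)
  obtain ⟨z, hz⟩ := exists_linearIndependent_rigRows_snoc p (fun e he => hF e (hF'F he))
    (by omega)
  calc rrk d p F + min 2 (F.card - rrk d p F) = F'.card := hcard.symm
    _ = rrk (d + 1) (fun v => Fin.snoc (p v) (z v)) F' :=
      (linearIndependent_rigRows_iff.mp hz).symm
    _ ≤ rrk (d + 1) q F' := rrk_le_rrk_of_generic hq _ _
    _ ≤ rrk (d + 1) q F := rrk_mono _ _ (coe_subset.mpr hF'F)

theorem rrk_image_map_some (d : ℕ) (q : Option V → Fin d → ℝ) (F : Finset (Sym2 V)) :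
    rrk d q ↑(F.image (Sym2.map some)) = rrk d (fun v => q (some v)) ↑F := by
  let f : V × Fin d → Option V × Fin d := Prod.map some id
  have hf : Function.Injective f := (Option.some_injective V).prodMap Function.injective_id
  let extend := Function.ExtendByZero.linearMap ℝ f
  have hrow : ∀ e, extend (rigRow d (fun v => q (some v)) e) = rigRow d q (e.map some) := by
    intro e
    induction e using Sym2.ind with
    | _ u v =>
      ext ⟨o, i⟩
      cases o with
      | none =>
        rw [Function.ExtendByZero.linearMap_apply, Function.extend_apply' _ _ _ (by simp [f])]
        simp [rigRow_mk]
      | some w =>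
        rw [Function.ExtendByZero.linearMap_apply, show (some w, i) = f (w, i) from rfl,
          hf.extend_apply]
        simp [rigRow_mk, f]
  have himg : rigRow d q '' ↑(F.image (Sym2.map some)) =
      extend '' (rigRow d (fun v => q (some v)) '' ↑F) := by
    rw [coe_image, Set.image_image, Set.image_image]
    exact Set.image_congr fun e _ => (hrow e).symm
  rw [rrk, rrk, himg, span_image]
  have hinj : Function.Injective extend := Function.extend_injective hf (0 : Option V × Fin d → ℝ)
  exact (equivMapOfInjective extend hinj _).finrank_eq.symm

theorem exists_subset_isKFoldCircuit_image_some {d k : ℕ} {q : Option V → Fin d → ℝ}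
    {D : Finset (Sym2 V)} {A : Finset (Sym2 (Option V))}
    (hA : IsPrincipalPart d q (coneEdges D) k A) (hapex : ∀ u : V, s(some u, none) ∈ A) :
    ∃ B ⊆ D, IsKFoldCircuit d q (B.image (Sym2.map some)) (k - 1) := by
  obtain ⟨B', hB'sub, hB', rfl⟩ := hA
  refine ⟨D.filter (Sym2.map some · ∈ B'), filter_subset _ _, ?_⟩
  convert hB'
  ext b
  simp only [mem_image, mem_filter]
  constructor
  · rintro ⟨e, ⟨-, he⟩, rfl⟩
    exact he
  · intro hb
    rcases mem_union.mp (hB'sub hb) with h | h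
    · obtain ⟨e, heD, rfl⟩ := mem_image.mp h
      exact ⟨e, ⟨heD, hb⟩, rfl⟩
    · obtain ⟨u, -, rfl⟩ := mem_image.mp h
      exact absurd hb (mem_sdiff.mp (hapex u)).2

end Rigidity

theorem cone_edges_same_part_implies_circuit_general
    (d k : ℕ) (hk : 1 ≤ k)
    {V : Type*} [Fintype V] [DecidableEq V]
    (D : Finset (Sym2 V)) (hsimple : ∀ e ∈ D, ¬ e.IsDiag)
    (p : V → Fin d → ℝ)
    (q : Option V → Fin (d+1) → ℝ) (hq : Generic (d+1) q)
    (hD : IsKFoldCircuit d p D k)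
    (hsame : ∃ A' : Finset (Sym2 (Option V)),
        IsPrincipalPart (d+1) q (coneEdges D) k A' ∧
        ∀ u : V, s((Option.some u : Option V), (none : Option V)) ∈ A') :
    k = 1 := by
  obtain ⟨A', hA', hapex⟩ := hsame
  obtain ⟨B, hBD, hB⟩ := exists_subset_isKFoldCircuit_image_some hA' hapex
  have hcone : rrk (d + 1) (fun v => q (some v)) B + (k - 1) = B.card := by
    rw [← rrk_image_map_some, ← card_image_of_injective B
      (Sym2.map.injective (Option.some_injective V))]
    exact hB.2
  have hdeficiency : B.card ≤ rrk d p B + k := card_le_rrk_add_of_subset hD.2 hBD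
  have hgain := rrk_add_min_le_rrk_succ p (hq.comp (Option.some_injective V))
    fun e he => hsimple e (hBD he)
  have hrank := rrk_le_card d p B
  omega

/-- Corollary 4.7: if all cone edges lie in one part of the principal partition of
the cone of a `k`-fold `R_d`-circuit, then `k = 1`. -/
theorem cone_edges_same_part_implies_circuit
    (d k : ℕ) (hd : 1 ≤ d) (hk : 1 ≤ k)
    {V : Type*} [Fintype V] [DecidableEq V]
    (D : Finset (Sym2 V)) (hsimple : ∀ e ∈ D, ¬ e.IsDiag)
    (hcov : ∀ w : V, ∃ e ∈ D, w ∈ e)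
    (p : V → Fin d → ℝ) (hp : Generic d p)
    (q : Option V → Fin (d+1) → ℝ) (hq : Generic (d+1) q)
    (hD : IsKFoldCircuit d p D k)
    (hsame : ∃ A' : Finset (Sym2 (Option V)),
        IsPrincipalPart (d+1) q (coneEdges D) k A' ∧
        ∀ u : V, s((Option.some u : Option V), (none : Option V)) ∈ A') :
    k = 1 :=
  cone_edges_same_part_implies_circuit_general d k hk D hsimple p q hq hD hsame
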